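/- arXiv:2605.23687 — 3 statements merged into one kernel-verified Lean document; each statement's English description precedes it below -/
import Mathlib

section
/- A square matrix A over the tropical semiring is tropically singular (the maximum in its tropical determinant is attained by at least two distinct permutations) if and only if its column vectors are tropically linearly dependent, meaning there exist scalars α_0,...,α_n in ℝ ∪ {-∞}, not all -∞, such that for every row index j the maximum of (α_i + a_{ji}) over i is attained at least twice. -/
/-- Tropical (max-plus) determinant of a square matrix with entries in ℝ ∪ {-∞}. -/
noncomputable def tropDet {m : ℕ} (A : Matrix (Fin m) (Fin m) (WithBot ℝ)) : WithBot ℝ :=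
  Finset.univ.sup fun π : Equiv.Perm (Fin m) => ∑ i, A i (π i)

/-- A square tropical matrix is tropically singular if the maximum in its tropical
determinant is attained by at least two distinct permutations. -/
def TropSingular {m : ℕ} (A : Matrix (Fin m) (Fin m) (WithBot ℝ)) : Prop :=
  ∃ π σ : Equiv.Perm (Fin m), π ≠ σ ∧
    (∑ i, A i (π i)) = tropDet A ∧ (∑ i, A i (σ i)) = tropDet A

/-!
If two optimal permutations differ in row `j₀`, the tropical cofactors of row `j₀` form a
dependence of the columns: in row `j₀` the maximum is the determinant, attained at both
permutations, and in every other row an exchange argument (the tropical Cramer rule) produces a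
second maximiser. If the determinant is `-∞` there is no finite perfect matching, so by
Frobenius–König some rows `Q` see only `-∞` on more than `n + 1 - #Q` columns, and induction on
the number of rows yields a dependence supported on those columns.

Conversely, given a dependence `α` and an optimal permutation `π`, send each row to the row that
`π` matches with another maximising column. Along a cycle of this map `π` can be rerouted; the
finite values of `α` cancel around the cycle, so the rerouted permutation is optimal as well.
-/

open Finset Function

theorem Function.exists_iterate_mem_periodicPts {α : Type*} [Finite α] (f : α → α) (x : α) :
    ∃ k, f^[k] x ∈ periodicPts f := by
  obtain ⟨a, b, hab, hne⟩ : ∃ a b, f^[a] x = f^[b] x ∧ a ≠ b := by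
    simpa [Injective] using not_injective_infinite_finite (f^[·] x)
  wlog hlt : a < b generalizing a b
  · exact this b a hab.symm hne.symm (by omega)
  refine ⟨a, mk_mem_periodicPts (Nat.sub_pos_of_lt hlt) ?_⟩
  rw [IsPeriodicPt, IsFixedPt, ← iterate_add_apply, Nat.sub_add_cancel hlt.le, hab]

/-- `f` restricted to its periodic points, where it is a bijection. -/
theorem Function.exists_perm_ne_one_forall_eq_or {α : Type*} [Finite α] [Nonempty α]
    {f : α → α} (hf : ∀ x, f x ≠ x) :
    ∃ τ : Equiv.Perm α, τ ≠ 1 ∧ ∀ x, τ x = x ∨ x ∈ Set.range f ∧ τ x = f x := by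
  classical
  obtain ⟨k, hk⟩ := exists_iterate_mem_periodicPts f (Classical.arbitrary α)
  set τ := Equiv.Perm.ofSubtype ((bijOn_periodicPts f).equiv f)
  have hτ : ∀ x ∈ periodicPts f, τ x = f x := fun x hx => Equiv.Perm.ofSubtype_apply_of_mem _ hx
  refine ⟨τ, fun h1 => hf _ (by rw [← hτ _ hk, h1, Equiv.Perm.one_apply]), fun x => ?_⟩
  by_cases hx : x ∈ periodicPts f
  · exact Or.inr ⟨periodicPts_subset_range hx, hτ x hx⟩
  · exact Or.inl (Equiv.Perm.ofSubtype_apply_of_not_mem _ hx)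

theorem WithBot.sum_le_sum_of_potential {ι κ : Type*} [Fintype ι] [Fintype κ]
    {β : κ → WithBot ℝ} (hβ : ∀ k, β k ≠ ⊥) (e e' : ι ≃ κ) {x y : ι → WithBot ℝ}
    (h : ∀ i, β (e i) + x i ≤ β (e' i) + y i) : ∑ i, x i ≤ ∑ i, y i := by
  have hsum := sum_le_sum fun i (_ : i ∈ univ) => h i
  rw [sum_add_distrib, sum_add_distrib, e.sum_comp β, e'.sum_comp β] at hsum
  exact (WithBot.add_le_add_iff_left (WithBot.sum_eq_bot_iff.not.2 (by simpa using hβ))).1 hsum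

theorem Finset.nontrivial_of_card_lt {α β : Type*} {s : Finset α} {t : Finset β}
    (hst : #s < #t) (hs : s.Nonempty) : Nontrivial β :=
  Set.nontrivial_of_nontrivial <|
    one_lt_card_iff_nontrivial.1 ((Nat.succ_le_of_lt hs.card_pos).trans_lt hst)

namespace Matrix

section RowMax

variable {m n : Type*} [Fintype n]

noncomputable def rowMax (A : Matrix m n (WithBot ℝ)) (α : n → WithBot ℝ) (j : m) :
    WithBot ℝ :=
  univ.sup fun i => α i + A j i

def MaxAttainedTwice (A : Matrix m n (WithBot ℝ)) (α : n → WithBot ℝ) (j : m) : Prop :=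
  ∃ i₁ i₂, i₁ ≠ i₂ ∧ α i₁ + A j i₁ = A.rowMax α j ∧ α i₂ + A j i₂ = A.rowMax α j

variable {A : Matrix m n (WithBot ℝ)} {α : n → WithBot ℝ} {j : m}

theorem le_rowMax (i : n) : α i + A j i ≤ A.rowMax α j :=
  le_sup (f := fun i => α i + A j i) (mem_univ i)

theorem MaxAttainedTwice.exists_ne (h : A.MaxAttainedTwice α j) (i : n) :
    ∃ i' ≠ i, α i' + A j i' = A.rowMax α j := by
  obtain ⟨i₁, i₂, hne, h₁, h₂⟩ := h
  rcases eq_or_ne i₁ i with rfl | hi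
  · exact ⟨i₂, hne.symm, h₂⟩
  · exact ⟨i₁, hi, h₁⟩

theorem maxAttainedTwice_of_forall_exists_ne [Nontrivial n]
    (h : ∀ i, α i + A j i ≠ ⊥ → ∃ i' ≠ i, α i + A j i ≤ α i' + A j i') :
    A.MaxAttainedTwice α j := by
  obtain ⟨i₁, -, hi₁⟩ := exists_mem_eq_sup univ univ_nonempty fun i => α i + A j i
  have hi₁ : A.rowMax α j = α i₁ + A j i₁ := hi₁
  by_cases hbot : α i₁ + A j i₁ = ⊥
  · have hall : ∀ i, α i + A j i = A.rowMax α j := fun i => by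
      rw [hi₁, hbot, ← le_bot_iff, ← hbot, ← hi₁]
      exact le_rowMax i
    obtain ⟨a, b, hab⟩ := exists_pair_ne n
    exact ⟨a, b, hab, hall a, hall b⟩
  · obtain ⟨i₂, hne, hle⟩ := h i₁ hbot
    exact ⟨i₂, i₁, hne, le_antisymm (le_rowMax i₂) (hi₁ ▸ hle), hi₁.symm⟩

/-- `α` is a tropical dependence of the columns `S`, tested on the rows `R`. -/
structure IsTropDependence (A : Matrix m n (WithBot ℝ)) (R : Finset m) (S : Finset n)
    (α : n → WithBot ℝ) : Prop where
  exists_ne_bot : ∃ i ∈ S, α i ≠ ⊥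
  eq_bot_of_notMem : ∀ i ∉ S, α i = ⊥
  maxAttainedTwice : ∀ j ∈ R, A.MaxAttainedTwice α j

variable {R : Finset m} {S : Finset n}

theorem IsTropDependence.mono {T : Finset n}
    (h : A.IsTropDependence R T α) (hTS : T ⊆ S) : A.IsTropDependence R S α where
  exists_ne_bot := by
    obtain ⟨i, hi, hα⟩ := h.exists_ne_bot
    exact ⟨i, hTS hi, hα⟩
  eq_bot_of_notMem i hi := h.eq_bot_of_notMem i fun hi' => hi (hTS hi')
  maxAttainedTwice := h.maxAttainedTwice

theorem IsTropDependence.of_sdiff [DecidableEq m] [Nontrivial n] {Q : Finset m}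
    (h : A.IsTropDependence (R \ Q) S α) (hQS : ∀ j ∈ Q, ∀ i ∈ S, A j i = ⊥) :
    A.IsTropDependence R S α where
  exists_ne_bot := h.exists_ne_bot
  eq_bot_of_notMem := h.eq_bot_of_notMem
  maxAttainedTwice j hj := by
    by_cases hjQ : j ∈ Q
    · refine maxAttainedTwice_of_forall_exists_ne fun i hi => absurd ?_ hi
      by_cases hiS : i ∈ S
      · rw [hQS j hjQ i hiS, WithBot.add_bot]
      · rw [h.eq_bot_of_notMem i hiS, WithBot.bot_add]
    · exact h.maxAttainedTwice j (mem_sdiff.2 ⟨hj, hjQ⟩)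

end RowMax

section Matching

variable {m n : Type*} [Fintype m] [Fintype n] [DecidableEq m] [DecidableEq n]

/-- For `#R = #S` this is the tropical minor of `A` on `R × S`. -/
noncomputable def maxMatchingWeight (A : Matrix m n (WithBot ℝ)) (R : Finset m)
    (S : Finset n) : WithBot ℝ :=
  (univ.filter fun f : m → n => Set.InjOn f R ∧ Set.MapsTo f R S).sup
    fun f => ∑ j ∈ R, A j (f j)

variable {A : Matrix m n (WithBot ℝ)} {R : Finset m} {S : Finset n}

theorem sum_le_maxMatchingWeight {f : m → n} (hf : Set.InjOn f R) (hfS : Set.MapsTo f R S) :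
    ∑ j ∈ R, A j (f j) ≤ A.maxMatchingWeight R S :=
  le_sup (f := fun f : m → n => ∑ j ∈ R, A j (f j)) (mem_filter.2 ⟨mem_univ f, hf, hfS⟩)

theorem exists_sum_eq_maxMatchingWeight (h : A.maxMatchingWeight R S ≠ ⊥) :
    ∃ f : m → n, Set.InjOn f R ∧ Set.MapsTo f R S ∧
      ∑ j ∈ R, A j (f j) = A.maxMatchingWeight R S := by
  unfold maxMatchingWeight at h ⊢
  set F := univ.filter fun f : m → n => Set.InjOn f R ∧ Set.MapsTo f R S
  have hF : F.Nonempty := nonempty_iff_ne_empty.2 fun he => h (by rw [he, sup_empty])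
  obtain ⟨f, hf, hsup⟩ := exists_mem_eq_sup F hF fun f : m → n => ∑ j ∈ R, A j (f j)
  exact ⟨f, (mem_filter.1 hf).2.1, (mem_filter.1 hf).2.2, hsup.symm⟩

theorem maxMatchingWeight_ne_bot_of_injective [Nonempty n] {g : R → n} (hg : Injective g)
    (hgS : ∀ j, g j ∈ S) (hfin : ∀ j : R, A j (g j) ≠ ⊥) : A.maxMatchingWeight R S ≠ ⊥ := by
  set f : m → n := fun j => if hj : j ∈ R then g ⟨j, hj⟩ else Classical.arbitrary n
  have hf : ∀ j (hj : j ∈ R), f j = g ⟨j, hj⟩ := fun j hj => dif_pos hj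
  refine ne_bot_of_le_ne_bot ?_ (sum_le_maxMatchingWeight (f := f) (fun a ha b hb hab => ?_)
    fun j hj => (hf j hj).symm ▸ hgS _)
  · exact WithBot.sum_eq_bot_iff.not.2 fun ⟨j, hj, hbot⟩ => hfin ⟨j, hj⟩ (hf j hj ▸ hbot)
  · exact congrArg Subtype.val (hg ((hf a ha).symm.trans (hab.trans (hf b hb))))

theorem add_maxMatchingWeight_erase_le {j : m} {i : n} (hj : j ∈ R) (hi : i ∈ S) :
    A j i + A.maxMatchingWeight (R.erase j) (S.erase i) ≤ A.maxMatchingWeight R S := by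
  by_cases hw : A.maxMatchingWeight (R.erase j) (S.erase i) = ⊥
  · simp [hw]
  obtain ⟨f, hf, hfS, hsum⟩ := exists_sum_eq_maxMatchingWeight hw
  have heq : Set.EqOn (update f j i) f ↑(R.erase j) := fun k hk =>
    update_of_ne (ne_of_mem_erase hk) _ _
  have hinj : Set.InjOn (update f j i) R := by
    rw [← insert_erase hj, coe_insert, Set.injOn_insert (by simp), heq.image_eq, update_self]
    exact ⟨hf.congr heq.symm, fun ⟨k, hk, hki⟩ => (mem_erase.1 (hfS hk)).1 hki⟩
  have hmaps : Set.MapsTo (update f j i) R S := fun k hk => by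
    rcases eq_or_ne k j with rfl | hkj
    · simpa using hi
    · exact heq (mem_erase.2 ⟨hkj, hk⟩) ▸ mem_of_mem_erase (hfS (mem_erase.2 ⟨hkj, hk⟩))
  calc A j i + A.maxMatchingWeight (R.erase j) (S.erase i)
      = ∑ k ∈ R, A k (update f j i k) := by
        rw [← add_sum_erase R _ hj, update_self, ← hsum]
        exact congrArg _ (sum_congr rfl fun k hk => by rw [heq hk])
    _ ≤ A.maxMatchingWeight R S := sum_le_maxMatchingWeight hinj hmaps

theorem sum_le_add_maxMatchingWeight_erase {f : m → n} {j : m} (hj : j ∈ R)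
    (hf : Set.InjOn f R) (hfS : Set.MapsTo f R S) :
    ∑ k ∈ R, A k (f k) ≤ A j (f j) + A.maxMatchingWeight (R.erase j) (S.erase (f j)) := by
  rw [← add_sum_erase R _ hj]
  gcongr
  refine sum_le_maxMatchingWeight (hf.mono (by simp)) fun k hk => ?_
  obtain ⟨hkj, hkR⟩ := mem_erase.1 hk
  exact mem_erase.2 ⟨fun h => hkj (hf hkR hj h), hfS hkR⟩

theorem exists_bot_block_of_maxMatchingWeight_eq_bot [Nonempty n] (hRS : #R ≤ #S)
    (hw : A.maxMatchingWeight R S = ⊥) :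
    ∃ Q ⊆ R, Q.Nonempty ∧ ∃ T ⊆ S, (∀ j ∈ Q, ∀ i ∈ T, A j i = ⊥) ∧ #(R \ Q) < #T := by
  set t : R → Finset n := fun j => {i ∈ S | A j i ≠ ⊥}
  have hHall : ¬ ∀ s : Finset R, #s ≤ #(s.biUnion t) := by
    rw [all_card_le_biUnion_card_iff_exists_injective]
    rintro ⟨g, hg, hgt⟩
    exact maxMatchingWeight_ne_bot_of_injective hg (fun j => (mem_filter.1 (hgt j)).1)
      (fun j => (mem_filter.1 (hgt j)).2) hw
  push Not at hHall
  obtain ⟨s, hs⟩ := hHall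
  set Q := s.map (Embedding.subtype (· ∈ R))
  set T := {i ∈ S | ∀ j ∈ Q, A j i = ⊥}
  have hcover : S ⊆ T ∪ s.biUnion t := fun i hi => by
    by_cases h : ∀ j ∈ Q, A j i = ⊥
    · exact mem_union_left _ (mem_filter.2 ⟨hi, h⟩)
    · push Not at h
      obtain ⟨j, hj, hji⟩ := h
      obtain ⟨j', hj', rfl⟩ := mem_map.1 hj
      exact mem_union_right _ (mem_biUnion.2 ⟨j', hj', mem_filter.2 ⟨hi, hji⟩⟩)
  have hQR : Q ⊆ R := fun j hj => by
    obtain ⟨j', -, rfl⟩ := mem_map.1 hj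
    exact j'.2
  have hcard := (card_le_card hcover).trans (card_union_le _ _)
  have hQ : #Q = #s := card_map _
  refine ⟨Q, hQR, card_pos.1 (by omega), T, filter_subset _ _,
    fun j hj i hi => (mem_filter.1 hi).2 j hj, ?_⟩
  rw [card_sdiff_of_subset hQR]
  have := card_le_card hQR
  omega

noncomputable def tropCofactor (A : Matrix m n (WithBot ℝ)) (R : Finset m) (S : Finset n)
    (i : n) : WithBot ℝ :=
  if i ∈ S then A.maxMatchingWeight R (S.erase i) else ⊥

/-- The tropical Cramer rule. -/
theorem maxAttainedTwice_tropCofactor [Nontrivial n] {j : m} (hj : j ∈ R) :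
    A.MaxAttainedTwice (A.tropCofactor R S) j := by
  refine maxAttainedTwice_of_forall_exists_ne fun i hi => ?_
  have hiS : i ∈ S := by
    by_contra h
    simp [tropCofactor, h] at hi
  have hw : A.maxMatchingWeight R (S.erase i) ≠ ⊥ := fun h => by
    simp [tropCofactor, hiS, h] at hi
  obtain ⟨f, hf, hfS, hsum⟩ := exists_sum_eq_maxMatchingWeight hw
  obtain ⟨hfi, hfj⟩ := mem_erase.1 (hfS hj)
  refine ⟨f j, hfi, ?_⟩
  simp only [tropCofactor, if_pos hiS, if_pos hfj]
  -- exchange the columns `i` and `f j` in row `j` of an optimal matching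
  calc A.maxMatchingWeight R (S.erase i) + A j i
      ≤ A j (f j) + A.maxMatchingWeight (R.erase j) ((S.erase (f j)).erase i) + A j i := by
        rw [← hsum, erase_right_comm]
        gcongr
        exact sum_le_add_maxMatchingWeight_erase hj hf hfS
    _ = A j (f j) + (A j i + A.maxMatchingWeight (R.erase j) ((S.erase (f j)).erase i)) := by
        rw [add_assoc, add_comm (A.maxMatchingWeight _ _)]
    _ ≤ A j (f j) + A.maxMatchingWeight R (S.erase (f j)) := by
        gcongr
        exact add_maxMatchingWeight_erase_le hj (mem_erase.2 ⟨hfi.symm, hiS⟩)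
    _ = A.maxMatchingWeight R (S.erase (f j)) + A j (f j) := add_comm _ _

theorem isTropDependence_tropCofactor (hRS : #R < #S) (h : ∃ i ∈ S, A.tropCofactor R S i ≠ ⊥) :
    A.IsTropDependence R S (A.tropCofactor R S) where
  exists_ne_bot := h
  eq_bot_of_notMem _ hi := if_neg hi
  maxAttainedTwice j hj :=
    have := nontrivial_of_card_lt hRS ⟨j, hj⟩
    maxAttainedTwice_tropCofactor hj

variable (A) in
theorem exists_isTropDependence (hRS : #R < #S) : ∃ α, A.IsTropDependence R S α := by
  induction hk : #R using Nat.strong_induction_on generalizing R S with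
  | _ k ih =>
  by_cases hcof : ∃ i ∈ S, A.tropCofactor R S i ≠ ⊥
  · exact ⟨_, isTropDependence_tropCofactor hRS hcof⟩
  push Not at hcof
  obtain ⟨i₀, hi₀⟩ := card_pos.1 (by omega : 0 < #S)
  have : Nonempty n := ⟨i₀⟩
  have hw : A.maxMatchingWeight R (S.erase i₀) = ⊥ := by
    simpa [tropCofactor, hi₀] using hcof i₀ hi₀
  obtain ⟨Q, hQR, hQ, T, hTS, hQT, hlt⟩ :=
    exists_bot_block_of_maxMatchingWeight_eq_bot (by rw [card_erase_of_mem hi₀]; omega) hw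
  have := nontrivial_of_card_lt hRS (hQ.mono hQR)
  obtain ⟨α, hα⟩ := ih _ (hk ▸ card_lt_card (sdiff_ssubset hQR hQ)) hlt rfl
  exact ⟨α, (hα.of_sdiff hQT).mono (hTS.trans (erase_subset _ _))⟩

end Matching

section Square

variable {N : ℕ} {A : Matrix (Fin N) (Fin N) (WithBot ℝ)}

theorem maxMatchingWeight_univ_le_tropDet : A.maxMatchingWeight univ univ ≤ tropDet A := by
  refine Finset.sup_le fun f hf => ?_
  have hinj : Injective f := Set.injOn_univ.1 (by simpa using (mem_filter.1 hf).2.1)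
  exact le_sup (f := fun π : Equiv.Perm (Fin N) => ∑ i, A i (π i))
    (mem_univ (Equiv.ofBijective f hinj.bijective_of_finite))

theorem exists_isTropDependence_univ_of_tropDet_eq_bot [Nontrivial (Fin N)]
    (hD : tropDet A = ⊥) : ∃ α, A.IsTropDependence univ univ α := by
  obtain ⟨Q, -, -, T, -, hQT, hlt⟩ := exists_bot_block_of_maxMatchingWeight_eq_bot le_rfl
    (le_bot_iff.1 (hD ▸ maxMatchingWeight_univ_le_tropDet))
  obtain ⟨α, hα⟩ := exists_isTropDependence A hlt
  exact ⟨α, (hα.of_sdiff hQT).mono (subset_univ _)⟩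

theorem isTropDependence_tropCofactor_erase {π σ : Equiv.Perm (Fin N)} {j₀ : Fin N}
    (hπ : ∑ j, A j (π j) = tropDet A) (hσ : ∑ j, A j (σ j) = tropDet A) (hj₀ : π j₀ ≠ σ j₀)
    (hD : tropDet A ≠ ⊥) :
    A.IsTropDependence univ univ (A.tropCofactor (univ.erase j₀) univ) := by
  have : Nontrivial (Fin N) := ⟨⟨_, _, hj₀⟩⟩
  set α := A.tropCofactor (univ.erase j₀) univ
  have hle : ∀ i, α i + A j₀ i ≤ tropDet A := fun i =>
    calc α i + A j₀ i = A j₀ i + A.maxMatchingWeight (univ.erase j₀) (univ.erase i) := by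
          simp [α, tropCofactor, add_comm]
      _ ≤ A.maxMatchingWeight univ univ := add_maxMatchingWeight_erase_le (mem_univ _) (mem_univ _)
      _ ≤ tropDet A := maxMatchingWeight_univ_le_tropDet
  have hge : ∀ ρ : Equiv.Perm (Fin N), ∑ j, A j (ρ j) = tropDet A →
      tropDet A ≤ α (ρ j₀) + A j₀ (ρ j₀) := fun ρ hρ =>
    calc tropDet A = ∑ j, A j (ρ j) := hρ.symm
      _ ≤ A j₀ (ρ j₀) + A.maxMatchingWeight (univ.erase j₀) (univ.erase (ρ j₀)) :=
          sum_le_add_maxMatchingWeight_erase (mem_univ _) ρ.injective.injOn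
            fun _ _ => mem_univ _
      _ = α (ρ j₀) + A j₀ (ρ j₀) := by simp [α, tropCofactor, add_comm]
  refine ⟨⟨π j₀, mem_univ _, fun h => hD (le_bot_iff.1 ?_)⟩, fun i hi => absurd (mem_univ i) hi,
    fun j _ => ?_⟩
  · simpa [h] using hge π hπ
  rcases eq_or_ne j j₀ with rfl | hj
  · refine maxAttainedTwice_of_forall_exists_ne fun i _ => ?_
    rcases eq_or_ne (π j) i with rfl | hi
    · exact ⟨σ j, hj₀.symm, (hle _).trans (hge σ hσ)⟩
    · exact ⟨π j, hi, (hle i).trans (hge π hπ)⟩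
  · exact maxAttainedTwice_tropCofactor (mem_erase.2 ⟨hj, mem_univ j⟩)

theorem tropSingular_of_sum_le {π τ : Equiv.Perm (Fin N)} (hπ : ∑ j, A j (π j) = tropDet A)
    (hτ : τ ≠ 1) (hle : ∑ j, A j (π j) ≤ ∑ j, A j (π (τ j))) : TropSingular A := by
  refine ⟨π, τ.trans π, fun h => hτ (Equiv.ext fun j => π.injective ?_), hπ,
    le_antisymm (le_sup (f := fun ρ : Equiv.Perm (Fin N) => ∑ j, A j (ρ j)) (mem_univ _))
      (hπ ▸ hle)⟩
  exact (Equiv.ext_iff.1 h j).symm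

theorem exists_perm_ne_one_sum_le {α : Fin N → WithBot ℝ} {i₀ : Fin N} (hi₀ : α i₀ ≠ ⊥)
    (hα : ∀ j, A.MaxAttainedTwice α j) (π : Equiv.Perm (Fin N)) :
    ∃ τ : Equiv.Perm (Fin N), τ ≠ 1 ∧ ∑ j, A j (π j) ≤ ∑ j, A j (π (τ j)) := by
  choose g hg hg_max using fun j => (hα j).exists_ne (π j)
  -- rows whose `π`-column has `α = ⊥` are sent to `π⁻¹ i₀`, so that the map lands where `α ≠ ⊥`
  set h : Fin N → Fin N := fun j => if α (π j) = ⊥ then π.symm i₀ else π.symm (g j)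
  have h_ne : ∀ j, h j ≠ j := fun j => by
    by_cases hj : α (π j) = ⊥
    · simp only [h, if_pos hj]
      exact fun e => hi₀ (by rwa [π.symm_apply_eq.1 e])
    · simp only [h, if_neg hj]
      exact fun e => hg j (π.symm_apply_eq.1 e)
  have : Nonempty (Fin N) := ⟨i₀⟩
  obtain ⟨τ, hτ1, hτ⟩ := exists_perm_ne_one_forall_eq_or h_ne
  refine ⟨τ, hτ1, ?_⟩
  by_cases hD : ∑ j, A j (π j) = ⊥
  · exact hD ▸ bot_le
  have hfin : ∀ j, A j (π j) ≠ ⊥ := fun j hj => hD (WithBot.sum_eq_bot_iff.2 ⟨j, mem_univ j, hj⟩)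
  have hstep : ∀ j, α (π j) ≠ ⊥ → α (π j) + A j (π j) ≤ α (π (h j)) + A j (π (h j)) := by
    intro j hj
    simpa [h, hj, hg_max] using le_rowMax (A := A) (α := α) (j := j) (π j)
  have h_range : ∀ j, α (π (h j)) ≠ ⊥ := fun j => by
    by_cases hj : α (π j) = ⊥
    · simpa [h, hj] using hi₀
    · intro hbot
      have := hstep j hj
      rw [hbot, WithBot.bot_add, le_bot_iff, WithBot.add_eq_bot] at this
      exact this.elim hj (hfin j)
  refine WithBot.sum_le_sum_of_potential (β := fun i => if α i = ⊥ then 0 else α i)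
    (fun i => by split_ifs <;> simp [*]) π (τ.trans π) fun j => ?_
  rcases hτ j with hj | ⟨⟨k, rfl⟩, hj⟩
  · simp [hj]
  · simpa [hj, h_range k, h_range (h k)] using hstep (h k) (h_range k)

theorem tropSingular_of_maxAttainedTwice {α : Fin N → WithBot ℝ} {i₀ : Fin N}
    (hi₀ : α i₀ ≠ ⊥) (hα : ∀ j, A.MaxAttainedTwice α j) : TropSingular A := by
  obtain ⟨π, -, hπ⟩ := exists_mem_eq_sup univ ⟨1, mem_univ _⟩
    fun ρ : Equiv.Perm (Fin N) => ∑ j, A j (ρ j)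
  obtain ⟨τ, hτ, hle⟩ := exists_perm_ne_one_sum_le hi₀ hα π
  exact tropSingular_of_sum_le hπ.symm hτ hle

end Square

end Matrix

/-- A is tropically singular iff its columns are tropically linearly dependent:
there are scalars α_i, not all -∞, such that in each row j the maximum of
α_i + a_{ji} is attained at least twice. -/
theorem tropSingular_iff_columns_dependent (n : ℕ)
    (A : Matrix (Fin (n + 1)) (Fin (n + 1)) (WithBot ℝ)) :
    TropSingular A ↔
      ∃ α : Fin (n + 1) → WithBot ℝ, (∃ i, α i ≠ ⊥) ∧
        ∀ j : Fin (n + 1), ∃ i₁ i₂ : Fin (n + 1), i₁ ≠ i₂ ∧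
          α i₁ + A j i₁ = (Finset.univ.sup fun i => α i + A j i) ∧
          α i₂ + A j i₂ = (Finset.univ.sup fun i => α i + A j i) := by
  constructor
  · rintro ⟨π, σ, hπσ, hπ, hσ⟩
    obtain ⟨j₀, hj₀⟩ : ∃ j, π j ≠ σ j := not_forall.1 fun h => hπσ (Equiv.ext h)
    have : Nontrivial (Fin (n + 1)) := ⟨⟨_, _, hj₀⟩⟩
    obtain ⟨α, hα⟩ : ∃ α, A.IsTropDependence Finset.univ Finset.univ α := by
      by_cases hD : tropDet A = ⊥
      · exact Matrix.exists_isTropDependence_univ_of_tropDet_eq_bot hD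
      · exact ⟨_, Matrix.isTropDependence_tropCofactor_erase hπ hσ hj₀ hD⟩
    obtain ⟨i, -, hi⟩ := hα.exists_ne_bot
    exact ⟨α, ⟨i, hi⟩, fun j => hα.maxAttainedTwice j (Finset.mem_univ j)⟩
  · rintro ⟨α, ⟨i, hi⟩, hα⟩
    exact Matrix.tropSingular_of_maxAttainedTwice hi hα
end

section
/- Let A be a tropically nonsingular (n+1)×(n+1) matrix over the tropical semiring and b ∈ (ℝ ∪ {-∞})^{n+1}. Suppose x ∈ (ℝ ∪ {-∞})^{n+1} is such that for every row i, the maximum in max_j(max(a_{ij} + x_j, b_i)) (i.e., in the expression ⊕_j (a_{ij}⊗x_j ⊕ b_i)) is attained at least twice. Then for each coordinate i, x_i ≤ |B_i| − |A|, where B_i is the Cramer matrix obtained from A by replacing column i with b. -/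
/-- A is tropically nonsingular if the maximum in its tropical determinant is
attained by exactly one permutation. -/
def TropNonsingular {m : ℕ} (A : Matrix (Fin m) (Fin m) (WithBot ℝ)) : Prop :=
  ∃! π : Equiv.Perm (Fin m), (∑ i, A i (π i)) = tropDet A

open Function Set Equiv Finset

theorem Function.nonempty_periodicPts {α : Type*} [Finite α] [Nonempty α] (f : α → α) :
    (periodicPts f).Nonempty := by
  obtain ⟨x⟩ := ‹Nonempty α›
  have key : ∀ a b, a < b → f^[a] x = f^[b] x → (periodicPts f).Nonempty := fun a b hab heq =>
    ⟨f^[a] x, mk_mem_periodicPts (Nat.sub_pos_of_lt hab) <| by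
      rw [IsPeriodicPt, IsFixedPt, ← iterate_add_apply, Nat.sub_add_cancel hab.le, heq]⟩
  obtain ⟨a, b, hab, heq⟩ := Finite.exists_ne_map_eq_of_infinite fun n => f^[n] x
  rcases hab.lt_or_gt with h | h
  exacts [key a b h heq, key b a h heq.symm]

theorem Function.exists_perm_ne_one_apply_eq {α : Type*} [Finite α] [Nonempty α] (f : α → α)
    (hf : ∀ x, f x ≠ x) : ∃ ρ : Perm α, ρ ≠ 1 ∧ ∀ x, ρ x ≠ x → ρ x = f x := by
  classical
  set ρ : Perm α := Perm.ofSubtype ((bijOn_periodicPts f).equiv f)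
  have hρ : ∀ x ∈ periodicPts f, ρ x = f x := fun x hx => Perm.ofSubtype_apply_of_mem _ hx
  obtain ⟨x, hx⟩ := nonempty_periodicPts f
  refine ⟨ρ, fun h => hf x ?_, fun y hy => hρ y ?_⟩
  · rw [← hρ x hx, h, Perm.one_apply]
  · by_contra h
    exact hy (Perm.ofSubtype_apply_of_not_mem _ h)

theorem Set.MapsTo.exists_perm_ne_one_apply_eq {α : Type*} [Finite α] {f : α → α} {s : Set α}
    (hf : MapsTo f s s) (hs : s.Nonempty) (hfix : ∀ x ∈ s, f x ≠ x) :
    ∃ ρ : Perm α, ρ ≠ 1 ∧ ∀ x, ρ x ≠ x → x ∈ s ∧ ρ x = f x := by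
  classical
  have : Nonempty s := hs.to_subtype
  obtain ⟨ρ, hρ1, hρ⟩ := Function.exists_perm_ne_one_apply_eq hf.restrict fun x h =>
    hfix x x.2 (congrArg Subtype.val h)
  refine ⟨Perm.ofSubtype ρ, fun h => hρ1 (Perm.ofSubtype_injective (h.trans (map_one _).symm)), ?_⟩
  intro x hx
  by_cases hxs : x ∈ s
  · rw [Perm.ofSubtype_apply_of_mem _ hxs] at hx ⊢
    exact ⟨hxs, congrArg Subtype.val (hρ _ fun h => hx (congrArg Subtype.val h))⟩
  · exact absurd (Perm.ofSubtype_apply_of_not_mem _ hxs) hx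

section Assignment

variable {ι M : Type*} [Fintype ι] [DecidableEq ι]
  [AddCommMonoid M] [LinearOrder M] [IsOrderedCancelAddMonoid M]

theorem WithBot.sum_le_sum_of_add_le_add_perm (ρ : Perm ι) {f g p : ι → WithBot M}
    (hp : ∀ c, ρ c ≠ c → p c ≠ ⊥) (hmoved : ∀ c, ρ c ≠ c → f c + p c ≤ g c + p (ρ c))
    (hfixed : ∀ c, ρ c = c → f c ≤ g c) :
    ∑ c, f c ≤ ∑ c, g c := by
  rw [← sum_add_sum_compl ρ.support f, ← sum_add_sum_compl ρ.support g]
  refine add_le_add ?_ (sum_le_sum fun c hc => hfixed c (by simpa using hc))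
  have hP : ∑ c ∈ ρ.support, p c ≠ ⊥ :=
    (WithBot.sum_lt_bot fun c hc => hp c (Perm.mem_support.mp hc)).ne'
  refine (WithBot.add_le_add_iff_right hP).mp ?_
  calc ∑ c ∈ ρ.support, f c + ∑ c ∈ ρ.support, p c
      = ∑ c ∈ ρ.support, (f c + p c) := sum_add_distrib.symm
    _ ≤ ∑ c ∈ ρ.support, (g c + p (ρ c)) :=
        sum_le_sum fun c hc => hmoved c (Perm.mem_support.mp hc)
    _ = ∑ c ∈ ρ.support, g c + ∑ c ∈ ρ.support, p c := by
        rw [sum_add_distrib, ρ.sum_comp _ p (fun c hc => Perm.mem_support.mpr hc)]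

theorem Matrix.exists_perm_ne_sum_le (W : Matrix ι ι (WithBot M)) (p : ι → WithBot M)
    (σ : Perm ι) (hσ : ∑ r, W r (σ r) ≠ ⊥) (hp : ∃ c, p c ≠ ⊥)
    (hrow : ∀ r, ∃ c ≠ σ r, W r (σ r) + p (σ r) ≤ W r c + p c) :
    ∃ τ ≠ σ, ∑ r, W r (σ r) ≤ ∑ r, W r (τ r) := by
  choose next hnext_ne hnext_le using hrow
  have hdiag : ∀ c, W (σ.symm c) c ≠ ⊥ := fun c h =>
    hσ (WithBot.sum_eq_bot_iff.mpr ⟨σ.symm c, mem_univ _, by rwa [σ.apply_symm_apply]⟩)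
  have hstep : ∀ c,
      W (σ.symm c) c + p c ≤ W (σ.symm c) (next (σ.symm c)) + p (next (σ.symm c)) :=
    fun c => by simpa using hnext_le (σ.symm c)
  have hmaps : MapsTo (fun c => next (σ.symm c)) {c | p c ≠ ⊥} {c | p c ≠ ⊥} := fun c hc =>
    (WithBot.add_ne_bot.mp (ne_bot_of_le_ne_bot (WithBot.add_ne_bot.mpr ⟨hdiag c, hc⟩)
      (hstep c))).2
  obtain ⟨ρ, hρ1, hρ⟩ := hmaps.exists_perm_ne_one_apply_eq hp fun c _ h =>
    hnext_ne (σ.symm c) (by rw [h, σ.apply_symm_apply])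
  refine ⟨σ.trans ρ, fun h => hρ1 ?_, ?_⟩
  · ext c
    simpa using congrArg (fun π => π (σ.symm c)) h
  · rw [← σ.symm.sum_comp, ← σ.symm.sum_comp (fun r => W r (σ.trans ρ r))]
    simp only [apply_symm_apply, trans_apply]
    refine WithBot.sum_le_sum_of_add_le_add_perm ρ (fun c hc => (hρ c hc).1) ?_ ?_
    · intro c hc
      rw [(hρ c hc).2]
      exact hstep c
    · intro c hc
      rw [hc]

end Assignment

theorem exists_ne_le_of_eq_sup {κ α : Type*} [Fintype κ] [SemilatticeSup α] [OrderBot α]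
    {v : κ → α} {u w : κ} (huw : u ≠ w) (hu : v u = univ.sup v) (hw : v w = univ.sup v)
    (a : κ) : ∃ c ≠ a, v a ≤ v c := by
  by_cases ha : a = u
  · exact ⟨w, ha ▸ huw.symm, hw ▸ le_sup (mem_univ a)⟩
  · exact ⟨u, Ne.symm ha, hu ▸ le_sup (mem_univ a)⟩

theorem sum_le_tropDet {m : ℕ} (A : Matrix (Fin m) (Fin m) (WithBot ℝ)) (π : Perm (Fin m)) :
    ∑ k, A k (π k) ≤ tropDet A :=
  le_sup (f := fun π : Perm (Fin m) => ∑ k, A k (π k)) (mem_univ π)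

def cramerAugment {m : ℕ} (A : Matrix (Fin m) (Fin m) (WithBot ℝ)) (b : Fin m → WithBot ℝ)
    (i : Fin m) (t : WithBot ℝ) : Matrix (Option (Fin m)) (Option (Fin m)) (WithBot ℝ)
  | none, none => t
  | none, some j => if j = i then 0 else ⊥
  | some k, none => b k
  | some k, some j => A k j

section cramerAugment

variable {m : ℕ} (A : Matrix (Fin m) (Fin m) (WithBot ℝ)) (b : Fin m → WithBot ℝ) (i : Fin m)
  (t : WithBot ℝ)

theorem sum_cramerAugment_optionCongr (τ : Perm (Fin m)) :
    ∑ r, cramerAugment A b i t r (τ.optionCongr r) = t + ∑ k, A k (τ k) := by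
  simp [Fintype.sum_option, cramerAugment]

theorem sum_cramerAugment_swap_le_tropDet_updateCol (j : Fin m) (τ : Perm (Fin m)) :
    ∑ r, cramerAugment A b i t r ((swap none (some j) * τ.optionCongr) r) ≤
      tropDet (A.updateCol i b) := by
  rw [Fintype.sum_option]
  by_cases hj : j = i
  · subst hj
    refine le_of_eq_of_le ?_ (sum_le_tropDet _ τ)
    simp only [Perm.coe_mul, comp_apply, optionCongr_apply, Option.map_none, swap_apply_left,
      cramerAugment, if_true, zero_add, Option.map_some]
    refine sum_congr rfl fun k _ => ?_
    by_cases hk : τ k = j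
    · simp [hk]
    · simp [swap_apply_of_ne_of_ne, hk]
  · simp [cramerAugment, hj]

theorem exists_ne_cramerAugment_add_le {x : Fin m → WithBot ℝ} (σ : Perm (Fin m))
    (hrow : ∀ k, ∃ c ≠ some (σ k), A k (σ k) + x (σ k) ≤ c.elim (b k) fun j => A k j + x j) :
    ∀ r, ∃ c ≠ σ.optionCongr r,
      cramerAugment A b i (x i) r (σ.optionCongr r) + (σ.optionCongr r).elim 0 x ≤
        cramerAugment A b i (x i) r c + c.elim 0 x := by
  rintro (_ | k)
  · exact ⟨some i, by simp, by simp [cramerAugment]⟩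
  · obtain ⟨c, hc, hle⟩ := hrow k
    refine ⟨c, by simpa using hc, ?_⟩
    cases c <;> simpa [cramerAugment] using hle

end cramerAugment

/-- Cramer system's upper bound: if A is tropically nonsingular and, for every row i,
the maximum among the terms a_{ij} + x_j (j = 0,…,n) and b_i is attained at least
twice, then x_i ⊗ |A| ≤ |B_i| (i.e. x_i ≤ |B_i| − |A|), where B_i is the matrix
obtained from A by replacing column i with b. -/
theorem cramer_upper_bound (n : ℕ)
    (A : Matrix (Fin (n + 1)) (Fin (n + 1)) (WithBot ℝ))
    (b x : Fin (n + 1) → WithBot ℝ)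
    (hA : TropNonsingular A)
    (hx : ∀ i : Fin (n + 1), ∃ u v : Option (Fin (n + 1)), u ≠ v ∧
      u.elim (b i) (fun j => A i j + x j) =
        (Finset.univ.sup fun o : Option (Fin (n + 1)) =>
          o.elim (b i) fun j => A i j + x j) ∧
      v.elim (b i) (fun j => A i j + x j) =
        (Finset.univ.sup fun o : Option (Fin (n + 1)) =>
          o.elim (b i) fun j => A i j + x j)) :
    ∀ i : Fin (n + 1), x i + tropDet A ≤ tropDet (A.updateCol i b) := by
  obtain ⟨σ, hσ, hσ_unique⟩ := hA
  intro i
  by_cases hbot : x i + tropDet A = ⊥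
  · simp [hbot]
  have hrow (k : Fin (n + 1)) :
      ∃ c ≠ some (σ k), A k (σ k) + x (σ k) ≤ c.elim (b k) fun j => A k j + x j := by
    obtain ⟨u, v, huv, hu, hv⟩ := hx k
    exact exists_ne_le_of_eq_sup (v := fun o => o.elim (b k) fun j => A k j + x j)
      huv hu hv (some (σ k))
  obtain ⟨τ, hτσ, hτ⟩ := Matrix.exists_perm_ne_sum_le (cramerAugment A b i (x i))
    (fun o => o.elim 0 x) σ.optionCongr (by rwa [sum_cramerAugment_optionCongr, hσ])
    ⟨none, WithBot.zero_ne_bot⟩ (exists_ne_cramerAugment_add_le A b i σ hrow)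
  rw [sum_cramerAugment_optionCongr, hσ] at hτ
  obtain ⟨⟨_ | j, τ⟩, rfl⟩ := Perm.decomposeOption.symm.surjective τ
  · rw [show Perm.decomposeOption.symm (none, τ) = τ.optionCongr from
      Equiv.ext (Perm.decomposeOption_symm_of_none_apply τ)] at hτσ hτ
    rw [sum_cramerAugment_optionCongr,
      WithBot.add_le_add_iff_left (WithBot.add_ne_bot.mp hbot).1] at hτ
    exact (hτσ (congrArg optionCongr (hσ_unique τ (le_antisymm (sum_le_tropDet A τ) hτ)))).elim
  · exact hτ.trans (sum_cramerAugment_swap_le_tropDet_updateCol A b i (x i) j τ)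
end

section
/- For a tropical meromorphic function f : ℝ → ℝ and a constant a ∈ ℝ, at every point x, the jump ω_{f⊕a}(x) of the slope of max(f, a) satisfies: if f(x) > a then ω_{f⊕a}(x) = ω_f(x); if f(x) < a then ω_{f⊕a}(x) = 0; and if f(x) = a then ω_{f⊕a}(x) ≥ max(ω_f(x), 0) when x is a crossing point, in particular max(f,a) has no poles at points where f(x) ≤ a. -/
/-- Jump of the slope of f at x: right derivative minus left derivative. -/
noncomputable def omegaJump (f : ℝ → ℝ) (x : ℝ) : ℝ :=
  derivWithin f (Set.Ioi x) x - derivWithin f (Set.Iio x) x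

private lemma derivWithin_right (g : ℝ → ℝ) (x s ε : ℝ) (hε : 0 < ε)
    (h : ∀ y ∈ Set.Ioo x (x + ε), g y = g x + s * (y - x)) :
    derivWithin g (Set.Ioi x) x = s := by
  have hlin : HasDerivWithinAt (fun y => g x + s * (y - x)) s (Set.Ioi x) x := by
    simpa using ((((hasDerivAt_id x).sub_const x).const_mul s).const_add (g x)).hasDerivWithinAt
  have hmem : Set.Ioo x (x + ε) ∈ nhdsWithin x (Set.Ioi x) :=
    Ioo_mem_nhdsGT_of_mem ⟨le_refl x, by linarith⟩
  have hev : g =ᶠ[nhdsWithin x (Set.Ioi x)] (fun y => g x + s * (y - x)) :=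
    Filter.eventuallyEq_of_mem hmem h
  have : HasDerivWithinAt g s (Set.Ioi x) x :=
    hlin.congr_of_eventuallyEq hev (by simp)
  exact this.derivWithin (uniqueDiffWithinAt_Ioi x)

private lemma derivWithin_left (g : ℝ → ℝ) (x s ε : ℝ) (hε : 0 < ε)
    (h : ∀ y ∈ Set.Ioo (x - ε) x, g y = g x + s * (y - x)) :
    derivWithin g (Set.Iio x) x = s := by
  have hlin : HasDerivWithinAt (fun y => g x + s * (y - x)) s (Set.Iio x) x := by
    simpa using ((((hasDerivAt_id x).sub_const x).const_mul s).const_add (g x)).hasDerivWithinAt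
  have hmem : Set.Ioo (x - ε) x ∈ nhdsWithin x (Set.Iio x) :=
    Ioo_mem_nhdsLT_of_mem ⟨by linarith, le_refl x⟩
  have hev : g =ᶠ[nhdsWithin x (Set.Iio x)] (fun y => g x + s * (y - x)) :=
    Filter.eventuallyEq_of_mem hmem h
  have : HasDerivWithinAt g s (Set.Iio x) x :=
    hlin.congr_of_eventuallyEq hev (by simp)
  exact this.derivWithin (uniqueDiffWithinAt_Iio x)

private lemma omegaJump_eq (g : ℝ → ℝ) (x sl sr ε : ℝ) (hε : 0 < ε)
    (hl : ∀ y ∈ Set.Ioo (x - ε) x, g y = g x + sl * (y - x))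
    (hr : ∀ y ∈ Set.Ioo x (x + ε), g y = g x + sr * (y - x)) :
    omegaJump g x = sr - sl := by
  unfold omegaJump
  rw [derivWithin_right g x sr ε hε hr, derivWithin_left g x sl ε hε hl]

/-- For a tropical meromorphic (continuous piecewise-linear) function f and a ∈ ℝ,
at every x: if f(x) > a then ω_{f⊕a}(x) = ω_f(x); if f(x) < a then ω_{f⊕a}(x) = 0;
if f(x) = a then ω_{f⊕a}(x) ≥ max(ω_f(x), 0); in particular f ⊕ a has no poles at
points where f(x) ≤ a. -/
theorem omega_max_const (f : ℝ → ℝ) (a : ℝ)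
    (hpl : ∀ x : ℝ, ∃ ε > 0, ∃ sl sr : ℝ,
      (∀ y ∈ Set.Ioo (x - ε) x, f y = f x + sl * (y - x)) ∧
      (∀ y ∈ Set.Ioo x (x + ε), f y = f x + sr * (y - x))) :
    ∀ x : ℝ,
      (a < f x → omegaJump (fun y => max (f y) a) x = omegaJump f x) ∧
      (f x < a → omegaJump (fun y => max (f y) a) x = 0) ∧
      (f x = a → max (omegaJump f x) 0 ≤ omegaJump (fun y => max (f y) a) x) ∧
      (f x ≤ a → 0 ≤ omegaJump (fun y => max (f y) a) x) := by
  intro x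
  obtain ⟨ε, hε, sl, sr, hl, hr⟩ := hpl x
  have hf : omegaJump f x = sr - sl := omegaJump_eq f x sl sr ε hε hl hr
  set M : ℝ := max |sl| |sr| with hM
  have hM0 : 0 ≤ M := le_trans (abs_nonneg sl) (le_max_left _ _)
  have key_gt : a < f x → omegaJump (fun y => max (f y) a) x = omegaJump f x := by
    intro hax
    set δ : ℝ := min ε ((f x - a) / (M + 1)) with hδdef
    have hδ : 0 < δ := lt_min hε (div_pos (by linarith) (by linarith))
    have hδε : δ ≤ ε := min_le_left _ _
    have hδ2 : δ * (M + 1) ≤ f x - a := by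
      have : δ ≤ (f x - a) / (M + 1) := min_le_right _ _
      calc δ * (M + 1) ≤ ((f x - a) / (M + 1)) * (M + 1) := by
            apply mul_le_mul_of_nonneg_right this (by linarith)
        _ = f x - a := by field_simp
    have hgx : max (f x) a = f x := max_eq_left (le_of_lt hax)
    have hl' : ∀ y ∈ Set.Ioo (x - δ) x, max (f y) a = max (f x) a + sl * (y - x) := by
      intro y hy
      have hy' : y ∈ Set.Ioo (x - ε) x := ⟨by linarith [hy.1], hy.2⟩
      have hfy := hl y hy'
      have habs : |sl * (y - x)| < f x - a := by
        have h1 : |sl * (y - x)| = |sl| * |y - x| := abs_mul _ _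
        have h2 : |y - x| < δ := by rw [abs_sub_lt_iff]; constructor <;> [linarith [hy.2]; linarith [hy.1]]
        have h3 : |sl| ≤ M := le_max_left _ _
        calc |sl * (y - x)| ≤ M * |y - x| := by rw [h1]; exact mul_le_mul_of_nonneg_right h3 (abs_nonneg _)
          _ < (M + 1) * δ := by
              nlinarith [abs_nonneg (y - x), h2, hM0, hδ]
          _ ≤ f x - a := by linarith [hδ2]
      have : a < f y := by
        have := abs_lt.mp habs
        rw [hfy]; linarith [this.1]
      rw [max_eq_left this.le, hgx, hfy]
    have hr' : ∀ y ∈ Set.Ioo x (x + δ), max (f y) a = max (f x) a + sr * (y - x) := by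
      intro y hy
      have hy' : y ∈ Set.Ioo x (x + ε) := ⟨hy.1, by linarith [hy.2]⟩
      have hfy := hr y hy'
      have habs : |sr * (y - x)| < f x - a := by
        have h1 : |sr * (y - x)| = |sr| * |y - x| := abs_mul _ _
        have h2 : |y - x| < δ := by rw [abs_sub_lt_iff]; constructor <;> [linarith [hy.2]; linarith [hy.1]]
        have h3 : |sr| ≤ M := le_max_right _ _
        calc |sr * (y - x)| ≤ M * |y - x| := by rw [h1]; exact mul_le_mul_of_nonneg_right h3 (abs_nonneg _)
          _ < (M + 1) * δ := by
              nlinarith [abs_nonneg (y - x), h2, hM0, hδ]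
          _ ≤ f x - a := by linarith [hδ2]
      have : a < f y := by
        have := abs_lt.mp habs
        rw [hfy]; linarith [this.1]
      rw [max_eq_left this.le, hgx, hfy]
    rw [hf]
    exact omegaJump_eq (fun y => max (f y) a) x sl sr δ hδ hl' hr'
  have key_lt : f x < a → omegaJump (fun y => max (f y) a) x = 0 := by
    intro hax
    set δ : ℝ := min ε ((a - f x) / (M + 1)) with hδdef
    have hδ : 0 < δ := lt_min hε (div_pos (by linarith) (by linarith))
    have hδε : δ ≤ ε := min_le_left _ _
    have hδ2 : δ * (M + 1) ≤ a - f x := by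
      have : δ ≤ (a - f x) / (M + 1) := min_le_right _ _
      calc δ * (M + 1) ≤ ((a - f x) / (M + 1)) * (M + 1) := by
            apply mul_le_mul_of_nonneg_right this (by linarith)
        _ = a - f x := by field_simp
    have hgx : max (f x) a = a := max_eq_right (le_of_lt hax)
    have hl' : ∀ y ∈ Set.Ioo (x - δ) x, max (f y) a = max (f x) a + 0 * (y - x) := by
      intro y hy
      have hy' : y ∈ Set.Ioo (x - ε) x := ⟨by linarith [hy.1], hy.2⟩
      have hfy := hl y hy'
      have habs : |sl * (y - x)| < a - f x := by
        have h1 : |sl * (y - x)| = |sl| * |y - x| := abs_mul _ _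
        have h2 : |y - x| < δ := by rw [abs_sub_lt_iff]; constructor <;> [linarith [hy.2]; linarith [hy.1]]
        have h3 : |sl| ≤ M := le_max_left _ _
        calc |sl * (y - x)| ≤ M * |y - x| := by rw [h1]; exact mul_le_mul_of_nonneg_right h3 (abs_nonneg _)
          _ < (M + 1) * δ := by
              nlinarith [abs_nonneg (y - x), h2, hM0, hδ]
          _ ≤ a - f x := by linarith [hδ2]
      have : f y < a := by
        have := abs_lt.mp habs
        rw [hfy]; linarith [this.2]
      rw [max_eq_right this.le, hgx]; ring
    have hr' : ∀ y ∈ Set.Ioo x (x + δ), max (f y) a = max (f x) a + 0 * (y - x) := by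
      intro y hy
      have hy' : y ∈ Set.Ioo x (x + ε) := ⟨hy.1, by linarith [hy.2]⟩
      have hfy := hr y hy'
      have habs : |sr * (y - x)| < a - f x := by
        have h1 : |sr * (y - x)| = |sr| * |y - x| := abs_mul _ _
        have h2 : |y - x| < δ := by rw [abs_sub_lt_iff]; constructor <;> [linarith [hy.2]; linarith [hy.1]]
        have h3 : |sr| ≤ M := le_max_right _ _
        calc |sr * (y - x)| ≤ M * |y - x| := by rw [h1]; exact mul_le_mul_of_nonneg_right h3 (abs_nonneg _)
          _ < (M + 1) * δ := by
              nlinarith [abs_nonneg (y - x), h2, hM0, hδ]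
          _ ≤ a - f x := by linarith [hδ2]
      have : f y < a := by
        have := abs_lt.mp habs
        rw [hfy]; linarith [this.2]
      rw [max_eq_right this.le, hgx]; ring
    have := omegaJump_eq (fun y => max (f y) a) x 0 0 δ hδ hl' hr'
    simpa using this
  have key_eq : f x = a → max (omegaJump f x) 0 ≤ omegaJump (fun y => max (f y) a) x := by
    intro hax
    have hgx : max (f x) a = a := by rw [hax]; exact max_self a
    have hl' : ∀ y ∈ Set.Ioo (x - ε) x, max (f y) a = max (f x) a + (min sl 0) * (y - x) := by
      intro y hy
      have hfy := hl y hy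
      have hyx : y - x < 0 := by linarith [hy.2]
      rw [hfy, hax, max_self]
      rcases le_or_gt sl 0 with h | h
      · have h1 : a ≤ a + sl * (y - x) := by nlinarith
        rw [min_eq_left h, max_eq_left h1]
      · have h1 : a + sl * (y - x) ≤ a := by nlinarith
        rw [min_eq_right h.le, max_eq_right h1]; ring
    have hr' : ∀ y ∈ Set.Ioo x (x + ε), max (f y) a = max (f x) a + (max sr 0) * (y - x) := by
      intro y hy
      have hfy := hr y hy
      have hyx : 0 < y - x := by linarith [hy.1]
      rw [hfy, hax, max_self]
      rcases le_or_gt sr 0 with h | h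
      · have h1 : a + sr * (y - x) ≤ a := by nlinarith
        rw [max_eq_right h1, max_eq_right h]; ring
      · have h1 : a ≤ a + sr * (y - x) := by nlinarith
        rw [max_eq_left h1, max_eq_left h.le]
    have hg : omegaJump (fun y => max (f y) a) x = max sr 0 - min sl 0 :=
      omegaJump_eq (fun y => max (f y) a) x (min sl 0) (max sr 0) ε hε hl' hr'
    rw [hg, hf]
    have h1 : sr - sl ≤ max sr 0 - min sl 0 :=
      sub_le_sub (le_max_left _ _) (min_le_left _ _)
    have h2 : (0:ℝ) ≤ max sr 0 - min sl 0 :=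
      sub_nonneg.mpr (le_trans (min_le_right _ _) (le_max_right _ _))
    exact max_le h1 h2
  refine ⟨key_gt, key_lt, key_eq, ?_⟩
  intro hle
  rcases lt_or_eq_of_le hle with h | h
  · rw [key_lt h]
  · exact le_trans (le_max_right _ _) (key_eq h)
end
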